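/- The multiplicative monoid of matrices in SL_2(ℤ) with all entries nonnegative is generated by the two matrices [[1,1],[0,1]] and [[1,0],[1,1]], and is freely generated by them (i.e., every such matrix has a unique factorization as a product of these two generators). -/
import Mathlib


/-- The matrix `μ(x) = [[1,1],[0,1]]`. -/
def muX : Matrix (Fin 2) (Fin 2) ℤ := !![1, 1; 0, 1]

/-- The matrix `μ(y) = [[1,0],[1,1]]`. -/
def muY : Matrix (Fin 2) (Fin 2) ℤ := !![1, 0; 1, 1]

/-- Words on the alphabet `{x, y}` are lists of booleans: `true` codes the
letter `x` and `false` codes the letter `y`. `mu` is the monoid homomorphism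
sending a word to the corresponding product of the matrices `μ(x)`, `μ(y)`. -/
def mu (w : List Bool) : Matrix (Fin 2) (Fin 2) ℤ :=
  (w.map (fun b => if b then muX else muY)).prod

lemma mu_nil : mu [] = 1 := rfl

lemma mu_cons (b : Bool) (w : List Bool) :
    mu (b :: w) = (if b then muX else muY) * mu w := by simp [mu]

lemma mu_det (w : List Bool) : (mu w).det = 1 := by
  induction w with
  | nil => simp [mu_nil]
  | cons b w ih => rw [mu_cons, Matrix.det_mul, ih]; cases b <;> simp [muX, muY]

lemma mu_nonneg (w : List Bool) : ∀ i j, 0 ≤ mu w i j := by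
  induction w with
  | nil => intro i j; fin_cases i <;> fin_cases j <;> simp [mu_nil, Matrix.one_apply]
  | cons b w ih =>
    intro i j; rw [mu_cons]
    cases b <;>
    · fin_cases i <;> fin_cases j <;>
        simp [Matrix.mul_apply, Fin.sum_univ_two, muX, muY] <;>
        linarith [ih 0 0, ih 0 1, ih 1 0, ih 1 1]

lemma no_mix (M N : Matrix (Fin 2) (Fin 2) ℤ) (hM : M.det = 1)
    (hMn : ∀ i j, 0 ≤ M i j) (hNn : ∀ i j, 0 ≤ N i j)
    (h : muX * M = muY * N) : False := by
  have e : ∀ i j, (muX * M) i j = (muY * N) i j := fun i j => by rw [h]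
  have e00 := e 0 0; have e01 := e 0 1; have e10 := e 1 0; have e11 := e 1 1
  simp [Matrix.mul_apply, Fin.sum_univ_two, muX, muY] at e00 e01 e10 e11
  rw [Matrix.det_fin_two] at hM
  have h1 : M 0 0 = 0 := by linarith [hMn 0 0, hNn 1 0]
  have h2 : M 0 1 = 0 := by linarith [hMn 0 1, hNn 1 1]
  rw [h1, h2] at hM
  simp at hM

lemma cancelX (M N : Matrix (Fin 2) (Fin 2) ℤ) (h : muX * M = muX * N) : M = N := by
  have hinv : (!![1,-1;0,1] : Matrix (Fin 2) (Fin 2) ℤ) * muX = 1 := by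
    simp [muX, Matrix.mul_fin_two]; rw [← Matrix.one_fin_two]
  calc M = (!![1,-1;0,1] * muX) * M := by rw [hinv, one_mul]
    _ = !![1,-1;0,1] * (muX * M) := by rw [mul_assoc]
    _ = !![1,-1;0,1] * (muX * N) := by rw [h]
    _ = (!![1,-1;0,1] * muX) * N := by rw [mul_assoc]
    _ = N := by rw [hinv, one_mul]

lemma cancelY (M N : Matrix (Fin 2) (Fin 2) ℤ) (h : muY * M = muY * N) : M = N := by
  have hinv : (!![1,0;-1,1] : Matrix (Fin 2) (Fin 2) ℤ) * muY = 1 := by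
    simp [muY, Matrix.mul_fin_two]; rw [← Matrix.one_fin_two]
  calc M = (!![1,0;-1,1] * muY) * M := by rw [hinv, one_mul]
    _ = !![1,0;-1,1] * (muY * M) := by rw [mul_assoc]
    _ = !![1,0;-1,1] * (muY * N) := by rw [h]
    _ = (!![1,0;-1,1] * muY) * N := by rw [mul_assoc]
    _ = N := by rw [hinv, one_mul]

lemma mu_cons_ne_one (b : Bool) (w : List Bool) : mu (b :: w) ≠ 1 := by
  intro h
  rw [mu_cons] at h
  have e : ∀ i j, ((if b then muX else muY) * mu w) i j = (1 : Matrix (Fin 2) (Fin 2) ℤ) i j :=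
    fun i j => by rw [h]
  have hn := mu_nonneg w
  cases b
  · have e00 := e 0 0; have e10 := e 1 0
    simp [Matrix.mul_apply, Fin.sum_univ_two, muY, Matrix.one_apply] at e00 e10
    linarith [hn 0 0, hn 1 0]
  · have e01 := e 0 1; have e11 := e 1 1
    simp [Matrix.mul_apply, Fin.sum_univ_two, muX, Matrix.one_apply] at e01 e11
    linarith [hn 0 1, hn 1 1]

lemma mu_inj : Function.Injective mu := by
  intro w
  induction w with
  | nil =>
    intro w' h
    cases w' with
    | nil => rfl
    | cons b w' => exact absurd (by rw [← h, mu_nil]) (mu_cons_ne_one b w')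
  | cons a w ih =>
    intro w' h
    cases w' with
    | nil => exact absurd (by rw [h, mu_nil]) (mu_cons_ne_one a w)
    | cons b w₂ =>
      rw [mu_cons, mu_cons] at h
      cases a <;> cases b
      · rw [ih (cancelY _ _ (by simpa using h))]
      · exact absurd (by simpa using h.symm)
          (fun h' => no_mix _ _ (mu_det w₂) (mu_nonneg w₂) (mu_nonneg w) h')
      · exact absurd (by simpa using h)
          (fun h' => no_mix _ _ (mu_det w) (mu_nonneg w) (mu_nonneg w₂) h')
      · rw [ih (cancelX _ _ (by simpa using h))]

lemma exists_word : ∀ n : ℕ, ∀ A : Matrix (Fin 2) (Fin 2) ℤ,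
    A.det = 1 → (∀ i j, 0 ≤ A i j) →
    A 0 0 + A 0 1 + A 1 0 + A 1 1 ≤ (n : ℤ) → ∃ w, mu w = A := by
  intro n
  induction n with
  | zero =>
    intro A hdet hpos hsum
    exfalso
    rw [Matrix.det_fin_two] at hdet
    push_cast at hsum
    nlinarith [hpos 0 0, hpos 0 1, hpos 1 0, hpos 1 1]
  | succ n ih =>
    intro A hdet hpos hsum
    rw [Matrix.det_fin_two] at hdet
    push_cast at hsum
    by_cases hone : A = 1
    · exact ⟨[], by rw [mu_nil, hone]⟩
    have h00 := hpos 0 0; have h01 := hpos 0 1; have h10 := hpos 1 0; have h11 := hpos 1 1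
    rcases le_or_gt (A 1 0) (A 0 0) with hac | hac <;>
      rcases le_or_gt (A 1 1) (A 0 1) with hbd | hbd
    · -- c ≤ a, d ≤ b : A = muX * B
      have hcd : 1 ≤ A 1 0 + A 1 1 := by
        by_contra hc
        push_neg at hc
        have hc0 : A 1 0 = 0 := by linarith
        have hd0 : A 1 1 = 0 := by linarith
        rw [hc0, hd0] at hdet
        simp at hdet
      obtain ⟨w, hw⟩ := ih !![A 0 0 - A 1 0, A 0 1 - A 1 1; A 1 0, A 1 1]
        (by rw [Matrix.det_fin_two_of]; ring_nf; linarith)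
        (by intro i j; fin_cases i <;> fin_cases j <;> simp <;> linarith)
        (by push_cast; simp; linarith)
      refine ⟨true :: w, ?_⟩
      rw [mu_cons, if_pos rfl, hw]
      ext i j
      fin_cases i <;> fin_cases j <;>
        simp [Matrix.mul_apply, Fin.sum_univ_two, muX] <;> ring
    · -- c ≤ a, b < d
      rcases eq_or_lt_of_le hac with heq | hlt
      · -- a = c, b < d : muY descent
        have hab : 1 ≤ A 0 0 + A 0 1 := by
          by_contra hc
          push_neg at hc
          have : A 0 0 = 0 := by linarith
          have : A 0 1 = 0 := by linarith
          nlinarith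
        obtain ⟨w, hw⟩ := ih !![A 0 0, A 0 1; A 1 0 - A 0 0, A 1 1 - A 0 1]
          (by rw [Matrix.det_fin_two_of]; ring_nf; linarith)
          (by intro i j; fin_cases i <;> fin_cases j <;> simp <;> linarith)
          (by push_cast; simp; linarith)
        refine ⟨false :: w, ?_⟩
        rw [mu_cons, if_neg (by simp), hw]
        ext i j
        fin_cases i <;> fin_cases j <;>
          simp [Matrix.mul_apply, Fin.sum_univ_two, muY] <;> ring
      · -- c < a, b < d : A = 1, contradiction
        exfalso
        apply hone
        have hb : A 0 1 = 0 := by nlinarith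
        have hc : A 1 0 = 0 := by nlinarith
        have ha : A 0 0 = 1 := by nlinarith
        have hd : A 1 1 = 1 := by nlinarith
        ext i j
        fin_cases i <;> fin_cases j <;> simp [ha, hb, hc, hd, Matrix.one_apply]
    · -- a < c, d ≤ b : impossible
      exfalso
      nlinarith
    · -- a < c, b < d : muY descent
      have hab : 1 ≤ A 0 0 + A 0 1 := by
        by_contra hc
        push_neg at hc
        have : A 0 0 = 0 := by linarith
        have : A 0 1 = 0 := by linarith
        nlinarith
      obtain ⟨w, hw⟩ := ih !![A 0 0, A 0 1; A 1 0 - A 0 0, A 1 1 - A 0 1]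
        (by rw [Matrix.det_fin_two_of]; ring_nf; linarith)
        (by intro i j; fin_cases i <;> fin_cases j <;> simp <;> linarith)
        (by push_cast; simp; linarith)
      refine ⟨false :: w, ?_⟩
      rw [mu_cons, if_neg (by simp), hw]
      ext i j
      fin_cases i <;> fin_cases j <;>
        simp [Matrix.mul_apply, Fin.sum_univ_two, muY] <;> ring

/-- The multiplicative monoid of matrices in `SL₂(ℤ)` with nonnegative entries
is freely generated by `μ(x) = [[1,1],[0,1]]` and `μ(y) = [[1,0],[1,1]]`:
the map from words on `{x,y}` is injective, and its range is exactly the set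
of determinant-one integer matrices with nonnegative entries. -/
theorem free_monoid_nonneg_SL2 :
    Function.Injective mu ∧
      Set.range mu =
        {A : Matrix (Fin 2) (Fin 2) ℤ | A.det = 1 ∧ ∀ i j, 0 ≤ A i j} := by
  refine ⟨mu_inj, ?_⟩
  ext A
  constructor
  · rintro ⟨w, rfl⟩
    exact ⟨mu_det w, mu_nonneg w⟩
  · rintro ⟨hdet, hpos⟩
    exact exists_word (A 0 0 + A 0 1 + A 1 0 + A 1 1).toNat A hdet hpos
      (Int.self_le_toNat _)
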